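/- Let f:(0,∞)→ℝ be a convex function with f(1)=0 that is strictly convex at 1, thrice differentiable at 1 with f''(1)>0, satisfies (f(t) − f'(1)(t−1))·(1 − (f'''(1)/(3f''(1)))(t−1)) ≥ (f''(1)/2)(t−1)² for every t∈(0,∞), and is such that the difference quotient g:(0,∞)→ℝ, g(x)=(f(x)−f(0))/x, is concave (where f(0)=lim_{t→0⁺}f(t) is assumed finite). Let P_X be a pmf on 𝒳 with P_X(x)>0 for all x, and let W be a channel from 𝒳 to 𝒴 such that P_Y = W P_X satisfies P_Y(y)>0 for all y. Then η_{χ²}(P_X,W) ≤ η_f(P_X,W) ≤ (f'(1)+f(0)) / ( f''(1) · min_{x∈𝒳} P_X(x) ) · η_{χ²}(P_X,W). -/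

import Mathlib

/-!
Put `g t = f t - f'(1) (t - 1)`, so that `D_f(R‖P) = ∑ₓ P g(R/P)` for pmfs. Concavity of
`(f t - f 0) / t` gives `g t ≤ (f'(1) + f(0)) (t - 1)²`, hence `D_f ≤ (f'(1) + f(0)) χ²`.
The hypothesis with `c = f'''(1) / (3 f''(1))` gives `P g(R/P) ≥ (f''(1)/2) (R - P)² / M` for
weights `M = P - c (R - P)` summing to one, so by Cauchy–Schwarz
`D_f(R‖P) ≥ (f''(1)/2) ‖R - P‖₁²`; since `∑ (R - P) = 0`,
`‖R - P‖₁² ≥ 2 ∑ (R - P)² ≥ 2 (minₓ P) χ²(R‖P)`. Applying the upper bound at the output of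
the channel and the lower bound at its input bounds `η_f`. Conversely, by the Peano form of
Taylor's theorem, `D_f(P + ε (R - P)‖P) = (f''(1)/2) ε² χ²(R‖P) + o(ε²)`, and likewise at the
output, so every χ²-ratio is a limit of f-divergence ratios.
-/

/-- A probability mass function on a finite set. -/
def IsPmf {𝒳 : Type*} [Fintype 𝒳] (P : 𝒳 → ℝ) : Prop :=
  (∀ x, 0 ≤ P x) ∧ ∑ x, P x = 1

/-- A channel (column-stochastic matrix) from `𝒳` to `𝒴`: each column `W · x` is a pmf. -/
def IsChannel {𝒳 𝒴 : Type*} [Fintype 𝒳] [Fintype 𝒴] (W : 𝒴 → 𝒳 → ℝ) : Prop :=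
  (∀ y x, 0 ≤ W y x) ∧ ∀ x, ∑ y, W y x = 1

/-- Action of a channel on a pmf: `(W P)(y) = ∑ₓ W(y|x) P(x)`. -/
def chanApply {𝒳 𝒴 : Type*} [Fintype 𝒳] (W : 𝒴 → 𝒳 → ℝ) (P : 𝒳 → ℝ) : 𝒴 → ℝ :=
  fun y => ∑ x, W y x * P x

/-- `f` is strictly convex at `1`. -/
def StrictlyConvexAtOne (f : ℝ → ℝ) : Prop :=
  ∀ x y : ℝ, 0 < x → 0 < y → x ≠ y → ∀ l : ℝ, 0 < l → l < 1 →
    l * x + (1 - l) * y = 1 → f 1 < l * f x + (1 - l) * f y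

/-- f-divergence `D_f(R‖P) = ∑ₓ P(x) f(R(x)/P(x))` (used here with `P > 0` and with
`f(0) = lim_{t→0⁺} f(t)` finite, so it is real-valued). -/
noncomputable def fDiv {𝒳 : Type*} [Fintype 𝒳] (f : ℝ → ℝ) (R P : 𝒳 → ℝ) : ℝ :=
  ∑ x, P x * f (R x / P x)

/-- Contraction coefficient for the f-divergence. -/
noncomputable def etaF {𝒳 𝒴 : Type*} [Fintype 𝒳] [Fintype 𝒴]
    (f : ℝ → ℝ) (P : 𝒳 → ℝ) (W : 𝒴 → 𝒳 → ℝ) : ℝ :=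
  sSup {r : ℝ | ∃ R : 𝒳 → ℝ, IsPmf R ∧ 0 < fDiv f R P ∧
    r = fDiv f (chanApply W R) (chanApply W P) / fDiv f R P}

/-- χ²-divergence `χ²(R‖P) = ∑ₓ (R(x) − P(x))²/P(x)`. -/
noncomputable def chiSq {𝒳 : Type*} [Fintype 𝒳] (R P : 𝒳 → ℝ) : ℝ :=
  ∑ x, (R x - P x) ^ 2 / P x

/-- Contraction coefficient for χ²-divergence. -/
noncomputable def etaChi {𝒳 𝒴 : Type*} [Fintype 𝒳] [Fintype 𝒴]
    (P : 𝒳 → ℝ) (W : 𝒴 → 𝒳 → ℝ) : ℝ :=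
  sSup {r : ℝ | ∃ R : 𝒳 → ℝ, IsPmf R ∧ 0 < chiSq R P ∧
    r = chiSq (chanApply W R) (chanApply W P) / chiSq R P}


open Filter Set Topology Finset

theorem ConvexOn.add_mul_sub_le_of_hasDerivAt {S : Set ℝ} {f : ℝ → ℝ} {x y f' : ℝ}
    (hf : ConvexOn ℝ S f) (hx : x ∈ S) (hy : y ∈ S) (hd : HasDerivAt f f' x) :
    f x + f' * (y - x) ≤ f y := by
  rcases lt_trichotomy y x with hyx | rfl | hxy
  · have h := hf.slope_le_of_hasDerivAt hy hx hyx hd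
    rw [slope_def_field, div_le_iff₀ (sub_pos.2 hyx)] at h
    linarith
  · simp
  · have h := hf.le_slope_of_hasDerivAt hx hy hxy hd
    rw [slope_def_field, le_div_iff₀ (sub_pos.2 hxy)] at h
    linarith

theorem ConcaveOn.le_add_mul_sub_of_hasDerivAt {S : Set ℝ} {f : ℝ → ℝ} {x y f' : ℝ}
    (hf : ConcaveOn ℝ S f) (hx : x ∈ S) (hy : y ∈ S) (hd : HasDerivAt f f' x) :
    f y ≤ f x + f' * (y - x) := by
  have h := hf.neg.add_mul_sub_le_of_hasDerivAt hx hy hd.neg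
  simp only [Pi.neg_apply] at h
  linarith

theorem le_of_forall_pos_of_continuousWithinAt {u v : ℝ → ℝ}
    (hu : ContinuousWithinAt u (Ioi 0) 0) (hv : ContinuousWithinAt v (Ioi 0) 0)
    (h : ∀ t, 0 < t → u t ≤ v t) {t : ℝ} (ht : 0 ≤ t) : u t ≤ v t := by
  rcases ht.eq_or_lt with rfl | ht
  · exact le_of_tendsto_of_tendsto hu hv (eventually_nhdsWithin_of_forall h)
  · exact h t ht

/-- `deriv f x = 0` wherever `f` is not differentiable, and `f''(x₀) ≠ 0` keeps `deriv f` away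
from `0` on a punctured neighbourhood of `x₀`. -/
theorem eventually_differentiableAt_of_deriv_deriv_ne_zero {f : ℝ → ℝ} {x₀ : ℝ}
    (hd2 : DifferentiableAt ℝ (deriv f) x₀) (hne : deriv (deriv f) x₀ ≠ 0) :
    ∀ᶠ x in 𝓝[≠] x₀, DifferentiableAt ℝ f x := by
  have hderiv_ne : ∀ᶠ x in 𝓝[≠] x₀, deriv f x ≠ 0 := by
    rcases eq_or_ne (deriv f x₀) 0 with h0 | h0
    · filter_upwards [(hasDerivAt_iff_tendsto_slope.mp hd2.hasDerivAt).eventually_ne hne]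
        with x hx hx0
      simp [slope_def_field, h0, hx0] at hx
    · exact eventually_nhdsWithin_of_eventually_nhds (hd2.continuousAt.eventually_ne h0)
  filter_upwards [hderiv_ne] with x hx
  by_contra hnd
  exact hx (deriv_zero_of_not_differentiableAt hnd)

theorem tendsto_taylor_two_div_sq {f : ℝ → ℝ} {x₀ : ℝ} (hd1 : DifferentiableAt ℝ f x₀)
    (hd2 : DifferentiableAt ℝ (deriv f) x₀) (hne : deriv (deriv f) x₀ ≠ 0) :
    Tendsto (fun x => (f x - f x₀ - deriv f x₀ * (x - x₀)) / (x - x₀) ^ 2) (𝓝[≠] x₀)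
      (𝓝 (deriv (deriv f) x₀ / 2)) := by
  refine HasDerivAt.lhopital_zero_nhdsNE (f' := fun x => deriv f x - deriv f x₀)
    (g' := fun x => 2 * (x - x₀)) ?_ ?_ ?_ ?_ ?_ ?_
  · filter_upwards [eventually_differentiableAt_of_deriv_deriv_ne_zero hd2 hne] with x hx
    exact ((hx.hasDerivAt.sub_const (f x₀)).sub
      (((hasDerivAt_id x).sub_const x₀).const_mul (deriv f x₀))).congr_deriv (by ring)
  · exact Eventually.of_forall fun x =>
      (((hasDerivAt_id x).sub_const x₀).pow 2).congr_deriv (by simp)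
  · filter_upwards [self_mem_nhdsWithin] with x hx
    exact mul_ne_zero two_ne_zero (sub_ne_zero.2 hx)
  · have : ContinuousAt (fun x => f x - f x₀ - deriv f x₀ * (x - x₀)) x₀ := by
      have := hd1.continuousAt; fun_prop
    simpa using this.tendsto.mono_left nhdsWithin_le_nhds
  · have : ContinuousAt (fun x : ℝ => (x - x₀) ^ 2) x₀ := by fun_prop
    simpa using this.tendsto.mono_left nhdsWithin_le_nhds
  · refine ((hasDerivAt_iff_tendsto_slope.mp hd2.hasDerivAt).div_const 2).congr'
      (eventually_nhdsWithin_of_forall fun x hx => ?_)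
    rw [slope_def_field, div_div, mul_comm (x - x₀)]

theorem two_mul_sum_sq_le_sq_sum_abs {ι : Type*} (s : Finset ι) (d : ι → ℝ)
    (hd : ∑ i ∈ s, d i = 0) : 2 * ∑ i ∈ s, d i ^ 2 ≤ (∑ i ∈ s, |d i|) ^ 2 := by
  classical
  set L := ∑ i ∈ s, |d i|
  -- each `d i` is minus the sum of the others
  have hmax : ∀ i ∈ s, 2 * |d i| ≤ L := by
    intro i hi
    have hsum := Finset.add_sum_erase s d hi
    have habs := Finset.add_sum_erase s (fun j => |d j|) hi
    have hrest : |d i| ≤ ∑ j ∈ s.erase i, |d j| := by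
      rw [show d i = -∑ j ∈ s.erase i, d j by linarith, abs_neg]
      exact Finset.abs_sum_le_sum_abs _ _
    linarith
  calc 2 * ∑ i ∈ s, d i ^ 2 = ∑ i ∈ s, 2 * |d i| * |d i| := by
        rw [Finset.mul_sum]
        exact Finset.sum_congr rfl fun i _ => by rw [mul_assoc, abs_mul_abs_self, sq]
    _ ≤ ∑ i ∈ s, L * |d i| :=
        Finset.sum_le_sum fun i hi => mul_le_mul_of_nonneg_right (hmax i hi) (abs_nonneg _)
    _ = L ^ 2 := by rw [← Finset.mul_sum, sq]

section Divergences

variable {𝒳 𝒴 : Type*} [Fintype 𝒳]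

theorem fDiv_sub_linear (f : ℝ → ℝ) (a : ℝ) {R P : 𝒳 → ℝ} (hP : ∀ x, P x ≠ 0)
    (hsum : ∑ x, R x = ∑ x, P x) :
    fDiv (fun t => f t - a * (t - 1)) R P = fDiv f R P := by
  have hx : ∀ x, P x * (f (R x / P x) - a * (R x / P x - 1))
      = P x * f (R x / P x) - a * (R x - P x) := fun x => by
    field_simp [hP x]
  simp only [fDiv, hx, Finset.sum_sub_distrib, ← Finset.mul_sum, hsum, sub_self, mul_zero,
    sub_zero]

theorem fDiv_mono {φ ψ : ℝ → ℝ} (h : ∀ t, 0 ≤ t → φ t ≤ ψ t) {R P : 𝒳 → ℝ}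
    (hP : ∀ x, 0 < P x) (hR : ∀ x, 0 ≤ R x) : fDiv φ R P ≤ fDiv ψ R P :=
  Finset.sum_le_sum fun x _ =>
    mul_le_mul_of_nonneg_left (h _ (div_nonneg (hR x) (hP x).le)) (hP x).le

theorem fDiv_mul_sq_sub_one (K : ℝ) (R : 𝒳 → ℝ) {P : 𝒳 → ℝ}
    (hP : ∀ x, P x ≠ 0) :
    fDiv (fun t => K * (t - 1) ^ 2) R P = K * chiSq R P := by
  rw [chiSq, Finset.mul_sum]
  exact Finset.sum_congr rfl fun x _ => by field_simp [hP x]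

theorem chiSq_nonneg (R : 𝒳 → ℝ) {P : 𝒳 → ℝ} (hP : ∀ x, 0 < P x) :
    0 ≤ chiSq R P :=
  Finset.sum_nonneg fun x _ => div_nonneg (sq_nonneg _) (hP x).le

theorem chiSq_line (P R : 𝒳 → ℝ) (ε : ℝ) :
    chiSq (fun x => P x + ε * (R x - P x)) P = ε ^ 2 * chiSq R P := by
  rw [chiSq, chiSq, Finset.mul_sum]
  exact Finset.sum_congr rfl fun x _ => by ring

theorem mul_chiSq_le_sum_sq {p : ℝ} {R P : 𝒳 → ℝ} (hP : ∀ x, 0 < P x)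
    (hp : ∀ x, p ≤ P x) :
    p * chiSq R P ≤ ∑ x, (R x - P x) ^ 2 := by
  rw [chiSq, Finset.mul_sum]
  refine Finset.sum_le_sum fun x _ => ?_
  rw [mul_div_assoc', div_le_iff₀ (hP x), mul_comm]
  exact mul_le_mul_of_nonneg_left (hp x) (sq_nonneg _)

theorem two_mul_mul_chiSq_le_sq_sum_abs {p : ℝ} {R P : 𝒳 → ℝ} (hP : ∀ x, 0 < P x)
    (hp : ∀ x, p ≤ P x) (hsum : ∑ x, R x = ∑ x, P x) :
    2 * p * chiSq R P ≤ (∑ x, |R x - P x|) ^ 2 := by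
  have hd : ∑ x, (R x - P x) = 0 := by rw [Finset.sum_sub_distrib, hsum, sub_self]
  calc 2 * p * chiSq R P = 2 * (p * chiSq R P) := by ring
    _ ≤ 2 * ∑ x, (R x - P x) ^ 2 := by gcongr; exact mul_chiSq_le_sum_sq hP hp
    _ ≤ _ := two_mul_sum_sq_le_sq_sum_abs _ _ hd

theorem IsPmf.line {P R : 𝒳 → ℝ} (hP : IsPmf P) (hR : IsPmf R) {ε : ℝ} (hε0 : 0 ≤ ε)
    (hε1 : ε ≤ 1) : IsPmf (fun x => P x + ε * (R x - P x)) := by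
  refine ⟨fun x => ?_, ?_⟩
  · nlinarith [hP.1 x, hR.1 x, mul_nonneg hε0 (hR.1 x), mul_nonneg (sub_nonneg.2 hε1) (hP.1 x)]
  · rw [Finset.sum_add_distrib, ← Finset.mul_sum, Finset.sum_sub_distrib, hP.2, hR.2]
    ring

theorem IsChannel.isPmf_chanApply [Fintype 𝒴] {W : 𝒴 → 𝒳 → ℝ} (hW : IsChannel W)
    {R : 𝒳 → ℝ} (hR : IsPmf R) : IsPmf (chanApply W R) := by
  refine ⟨fun y => Finset.sum_nonneg fun x _ => mul_nonneg (hW.1 y x) (hR.1 x), ?_⟩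
  simp only [chanApply]
  rw [Finset.sum_comm]
  simp_rw [← Finset.sum_mul, hW.2, one_mul, hR.2]

theorem chanApply_line (W : 𝒴 → 𝒳 → ℝ) (P R : 𝒳 → ℝ) (ε : ℝ) :
    chanApply W (fun x => P x + ε * (R x - P x))
      = fun y => chanApply W P y + ε * (chanApply W R y - chanApply W P y) := by
  funext y
  simp only [chanApply, mul_add, Finset.sum_add_distrib, Finset.mul_sum, ← Finset.sum_sub_distrib]
  congr 1
  exact Finset.sum_congr rfl fun x _ => by ring

theorem fDiv_chanApply_le [Fintype 𝒴] {φ : ℝ → ℝ} (hφ : ConvexOn ℝ (Ici 0) φ)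
    {W : 𝒴 → 𝒳 → ℝ} (hW : IsChannel W) {R P : 𝒳 → ℝ} (hR : ∀ x, 0 ≤ R x)
    (hP : ∀ x, 0 < P x) (hWP : ∀ y, 0 < chanApply W P y) :
    fDiv φ (chanApply W R) (chanApply W P) ≤ fDiv φ R P := by
  have hy : ∀ y, chanApply W P y * φ (chanApply W R y / chanApply W P y)
      ≤ ∑ x, W y x * (P x * φ (R x / P x)) := by
    intro y
    have hw : ∀ x, W y x * P x / chanApply W P y * (R x / P x)
        = W y x * R x / chanApply W P y := fun x => by field_simp [(hP x).ne']
    have hJ := hφ.map_sum_le (t := Finset.univ) (w := fun x => W y x * P x / chanApply W P y)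
      (p := fun x => R x / P x)
      (fun x _ => div_nonneg (mul_nonneg (hW.1 y x) (hP x).le) (hWP y).le)
      (by rw [← Finset.sum_div]; exact div_self (hWP y).ne')
      (fun x _ => div_nonneg (hR x) (hP x).le)
    simp only [smul_eq_mul, hw, ← Finset.sum_div] at hJ
    calc chanApply W P y * φ (chanApply W R y / chanApply W P y)
        ≤ chanApply W P y * ∑ x, W y x * P x / chanApply W P y * φ (R x / P x) :=
          mul_le_mul_of_nonneg_left hJ (hWP y).le
      _ = _ := by
          rw [Finset.mul_sum]
          exact Finset.sum_congr rfl fun x _ => by field_simp [(hWP y).ne']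
  calc fDiv φ (chanApply W R) (chanApply W P) ≤ ∑ y, ∑ x, W y x * (P x * φ (R x / P x)) :=
        Finset.sum_le_sum fun y _ => hy y
    _ = fDiv φ R P := by
        rw [Finset.sum_comm]
        simp_rw [← Finset.sum_mul, hW.2, one_mul, fDiv]

theorem chiSq_chanApply_le [Fintype 𝒴] {W : 𝒴 → 𝒳 → ℝ} (hW : IsChannel W)
    {R P : 𝒳 → ℝ} (hR : ∀ x, 0 ≤ R x) (hP : ∀ x, 0 < P x)
    (hWP : ∀ y, 0 < chanApply W P y) :
    chiSq (chanApply W R) (chanApply W P) ≤ chiSq R P := by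
  have hconv : ConvexOn ℝ (Ici 0) fun t : ℝ => 1 * (t - 1) ^ 2 := by
    simpa [Function.comp_def, ← sub_eq_neg_add] using
      ((Even.convexOn_pow (𝕜 := ℝ) even_two).translate_right (-1)).subset
        (Set.subset_univ _) (convex_Ici 0)
  have := fDiv_chanApply_le hconv hW hR hP hWP
  rwa [fDiv_mul_sq_sub_one _ _ fun y => (hWP y).ne', fDiv_mul_sq_sub_one _ _ fun x => (hP x).ne',
    one_mul, one_mul] at this

end Divergences

structure ChiSqEnvelope (f : ℝ → ℝ) (a q c K : ℝ) : Prop where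
  tangent_le : ∀ t, 0 ≤ t → a * (t - 1) ≤ f t
  sub_le_mul_sq : ∀ t, 0 ≤ t → f t - a * (t - 1) ≤ K * (t - 1) ^ 2
  mul_sq_le_mul : ∀ t, 0 ≤ t → q / 2 * (t - 1) ^ 2 ≤ (f t - a * (t - 1)) * (1 - c * (t - 1))

namespace ChiSqEnvelope

variable {𝒳 : Type*} [Fintype 𝒳] {f : ℝ → ℝ} {a q c K : ℝ} {R P : 𝒳 → ℝ}

theorem coeff_nonneg (h : ChiSqEnvelope f a q c K) : 0 ≤ K := by
  have h1 := h.tangent_le 2 zero_le_two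
  have h2 := h.sub_le_mul_sq 2 zero_le_two
  linarith

theorem sub_mul_sub_pos (h : ChiSqEnvelope f a q c K) (hq : 0 < q) {r s : ℝ} (hs : 0 < s)
    (hr : 0 ≤ r) : 0 < s - c * (r - s) := by
  rcases eq_or_ne r s with rfl | hrs
  · simpa using hs
  set t := r / s
  have ht : 0 ≤ t := div_nonneg hr hs.le
  have ht1 : t - 1 ≠ 0 := by
    rw [sub_ne_zero, Ne, div_eq_one_iff_eq hs.ne']
    exact hrs
  have hlow : 0 < (f t - a * (t - 1)) * (1 - c * (t - 1)) :=
    (by positivity : 0 < q / 2 * (t - 1) ^ 2).trans_le (h.mul_sq_le_mul t ht)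
  have hfac := pos_of_mul_pos_right hlow (sub_nonneg.2 (h.tangent_le t ht))
  have hM : s - c * (r - s) = s * (1 - c * (t - 1)) := by
    simp only [t]; field_simp
  rw [hM]
  exact mul_pos hs hfac

theorem half_mul_sq_div_le (h : ChiSqEnvelope f a q c K) (hq : 0 < q) {r s : ℝ} (hs : 0 < s)
    (hr : 0 ≤ r) :
    q / 2 * (r - s) ^ 2 / (s - c * (r - s)) ≤ s * (f (r / s) - a * (r / s - 1)) := by
  rw [div_le_iff₀ (h.sub_mul_sub_pos hq hs hr)]
  have ht : 0 ≤ r / s := div_nonneg hr hs.le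
  set t := r / s
  have hrt : r = s * t := by simp only [t]; field_simp
  calc q / 2 * (r - s) ^ 2 = s ^ 2 * (q / 2 * (t - 1) ^ 2) := by rw [hrt]; ring
    _ ≤ s ^ 2 * ((f t - a * (t - 1)) * (1 - c * (t - 1))) :=
        mul_le_mul_of_nonneg_left (h.mul_sq_le_mul t ht) (sq_nonneg s)
    _ = _ := by rw [hrt]; ring

theorem fDiv_nonneg (h : ChiSqEnvelope f a q c K) (hP : ∀ x, 0 < P x) (hR : ∀ x, 0 ≤ R x)
    (hsum : ∑ x, R x = ∑ x, P x) : 0 ≤ fDiv f R P := by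
  rw [← fDiv_sub_linear f a (fun x => (hP x).ne') hsum]
  exact Finset.sum_nonneg fun x _ =>
    mul_nonneg (hP x).le (sub_nonneg.2 (h.tangent_le _ (div_nonneg (hR x) (hP x).le)))

theorem fDiv_le_mul_chiSq (h : ChiSqEnvelope f a q c K) (hP : ∀ x, 0 < P x)
    (hR : ∀ x, 0 ≤ R x) (hsum : ∑ x, R x = ∑ x, P x) : fDiv f R P ≤ K * chiSq R P := by
  rw [← fDiv_sub_linear f a (fun x => (hP x).ne') hsum,
    ← fDiv_mul_sq_sub_one K R fun x => (hP x).ne']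
  exact fDiv_mono h.sub_le_mul_sq hP hR

/-- A Pinsker-type inequality; the weights `P x - c (R x - P x)` sum to one, so Cauchy–Schwarz
applies to them. -/
theorem half_mul_sq_sum_abs_le_fDiv (h : ChiSqEnvelope f a q c K) (hq : 0 < q)
    (hP : ∀ x, 0 < P x) (hP1 : ∑ x, P x = 1) (hR : IsPmf R) :
    q / 2 * (∑ x, |R x - P x|) ^ 2 ≤ fDiv f R P := by
  set M := fun x => P x - c * (R x - P x)
  have hM : ∀ x, 0 < M x := fun x => h.sub_mul_sub_pos hq (hP x) (hR.1 x)
  have hM1 : ∑ x, M x = 1 := by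
    simp only [M, Finset.sum_sub_distrib, ← Finset.mul_sum, hR.2, hP1, sub_self, mul_zero,
      sub_zero]
  calc q / 2 * (∑ x, |R x - P x|) ^ 2 = q / 2 * ((∑ x, |R x - P x|) ^ 2 / ∑ x, M x) := by
        rw [hM1, div_one]
    _ ≤ q / 2 * ∑ x, |R x - P x| ^ 2 / M x := by
        gcongr
        exact Finset.sq_sum_div_le_sum_sq_div _ _ fun x _ => hM x
    _ = ∑ x, q / 2 * (R x - P x) ^ 2 / M x := by
        rw [Finset.mul_sum]
        simp only [sq_abs, mul_div_assoc]
    _ ≤ ∑ x, P x * (f (R x / P x) - a * (R x / P x - 1)) :=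
        Finset.sum_le_sum fun x _ => h.half_mul_sq_div_le hq (hP x) (hR.1 x)
    _ = fDiv f R P := fDiv_sub_linear f a (fun x => (hP x).ne') (by rw [hR.2, hP1])

theorem mul_mul_chiSq_le_fDiv (h : ChiSqEnvelope f a q c K) (hq : 0 < q) {p : ℝ}
    (hp : ∀ x, p ≤ P x) (hP : ∀ x, 0 < P x) (hP1 : ∑ x, P x = 1) (hR : IsPmf R) :
    q * p * chiSq R P ≤ fDiv f R P :=
  calc q * p * chiSq R P = q / 2 * (2 * p * chiSq R P) := by ring
    _ ≤ q / 2 * (∑ x, |R x - P x|) ^ 2 := by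
        gcongr
        exact two_mul_mul_chiSq_le_sq_sum_abs hP hp (by rw [hR.2, hP1])
    _ ≤ fDiv f R P := h.half_mul_sq_sum_abs_le_fDiv hq hP hP1 hR

end ChiSqEnvelope

theorem tendsto_fDiv_line_div_sq {𝒳 : Type*} [Fintype 𝒳] {f : ℝ → ℝ} (hf1 : f 1 = 0)
    (hd1 : DifferentiableAt ℝ f 1) (hd2 : DifferentiableAt ℝ (deriv f) 1)
    (hne : deriv (deriv f) 1 ≠ 0) {R P : 𝒳 → ℝ} (hP : ∀ x, 0 < P x)
    (hsum : ∑ x, R x = ∑ x, P x) :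
    Tendsto (fun ε => fDiv f (fun x => P x + ε * (R x - P x)) P / ε ^ 2) (𝓝[≠] 0)
      (𝓝 (deriv (deriv f) 1 / 2 * chiSq R P)) := by
  set T := fun t => (f t - f 1 - deriv f 1 * (t - 1)) / (t - 1) ^ 2
  -- also at `t = 1`, where `T 1 = 0 / 0 = 0`
  have hT : ∀ t, f t - deriv f 1 * (t - 1) = (t - 1) ^ 2 * T t := by
    intro t
    rcases eq_or_ne t 1 with rfl | ht
    · simp [hf1]
    · simp only [T, hf1]
      field_simp [sub_ne_zero.2 ht]
      ring
  have hline : ∀ ε ≠ 0, fDiv f (fun x => P x + ε * (R x - P x)) P / ε ^ 2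
      = ∑ x, (R x - P x) ^ 2 / P x * T (1 + ε * ((R x - P x) / P x)) := by
    intro ε hε
    have hsumε : ∑ x, (P x + ε * (R x - P x)) = ∑ x, P x := by
      rw [Finset.sum_add_distrib, ← Finset.mul_sum, Finset.sum_sub_distrib, hsum]
      ring
    rw [← fDiv_sub_linear f (deriv f 1) (fun x => (hP x).ne') hsumε, fDiv, Finset.sum_div]
    refine Finset.sum_congr rfl fun x _ => ?_
    have harg : (P x + ε * (R x - P x)) / P x = 1 + ε * ((R x - P x) / P x) := by
      field_simp [(hP x).ne']
    rw [harg, hT]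
    field_simp [(hP x).ne']
    ring
  have hterm : ∀ x, Tendsto (fun ε => (R x - P x) ^ 2 / P x * T (1 + ε * ((R x - P x) / P x)))
      (𝓝[≠] 0) (𝓝 ((R x - P x) ^ 2 / P x * (deriv (deriv f) 1 / 2))) := by
    intro x
    rcases eq_or_ne (R x - P x) 0 with h0 | h0
    · simp [h0]
    refine ((tendsto_taylor_two_div_sq hd1 hd2 hne).comp ?_).const_mul _
    have hu : (R x - P x) / P x ≠ 0 := div_ne_zero h0 (hP x).ne'
    refine tendsto_nhdsWithin_iff.2 ⟨?_, ?_⟩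
    · have : Continuous fun ε : ℝ => 1 + ε * ((R x - P x) / P x) := by fun_prop
      simpa using (this.tendsto 0).mono_left nhdsWithin_le_nhds
    · filter_upwards [self_mem_nhdsWithin] with ε hε
      simpa [hu] using hε
  rw [chiSq, Finset.mul_sum]
  simp_rw [mul_comm (deriv (deriv f) 1 / 2)]
  exact (tendsto_finsetSum _ fun x _ => hterm x).congr'
    (eventually_nhdsWithin_of_forall fun ε hε => (hline ε hε).symm)

section Contraction

variable {𝒳 𝒴 : Type*} [Fintype 𝒳] [Fintype 𝒴] {P R : 𝒳 → ℝ}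
  {W : 𝒴 → 𝒳 → ℝ}

theorem etaChi_nonneg (hWP : ∀ y, 0 < chanApply W P y) : 0 ≤ etaChi P W :=
  Real.sSup_nonneg <| by
    rintro r ⟨R, -, hpos, rfl⟩
    exact div_nonneg (chiSq_nonneg _ hWP) hpos.le

theorem chiSq_div_le_etaChi (hW : IsChannel W) (hP : ∀ x, 0 < P x)
    (hWP : ∀ y, 0 < chanApply W P y) (hR : IsPmf R) (hpos : 0 < chiSq R P) :
    chiSq (chanApply W R) (chanApply W P) / chiSq R P ≤ etaChi P W := by
  refine le_csSup ⟨1, ?_⟩ ⟨R, hR, hpos, rfl⟩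
  rintro r ⟨R, hR, hpos, rfl⟩
  exact div_le_one_of_le₀ (chiSq_chanApply_le hW hR.1 hP hWP) hpos.le

namespace ChiSqEnvelope

variable {f : ℝ → ℝ} {a q c K p : ℝ}

theorem etaF_nonneg (h : ChiSqEnvelope f a q c K) (hPX : IsPmf P) (hW : IsChannel W)
    (hWP : ∀ y, 0 < chanApply W P y) : 0 ≤ etaF f P W :=
  Real.sSup_nonneg <| by
    rintro r ⟨R, hR, hpos, rfl⟩
    refine div_nonneg (h.fDiv_nonneg hWP (hW.isPmf_chanApply hR).1 ?_) hpos.le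
    rw [(hW.isPmf_chanApply hR).2, (hW.isPmf_chanApply hPX).2]

theorem fDiv_div_le_mul_etaChi (h : ChiSqEnvelope f a q c K) (hq : 0 < q)
    (hp : ∀ x, p ≤ P x) (hp0 : 0 < p) (hPX : IsPmf P) (hP : ∀ x, 0 < P x) (hW : IsChannel W)
    (hWP : ∀ y, 0 < chanApply W P y) (hR : IsPmf R) (hpos : 0 < fDiv f R P) :
    fDiv f (chanApply W R) (chanApply W P) / fDiv f R P ≤ K / (q * p) * etaChi P W := by
  have hWR := hW.isPmf_chanApply hR
  have hsumY : ∑ y, chanApply W R y = ∑ y, chanApply W P y := by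
    rw [hWR.2, (hW.isPmf_chanApply hPX).2]
  have hχ : 0 < chiSq R P := by
    refine (chiSq_nonneg R hP).lt_of_ne fun h0 => ?_
    have := h.fDiv_le_mul_chiSq hP hR.1 (by rw [hR.2, hPX.2])
    rw [← h0, mul_zero] at this
    linarith
  calc fDiv f (chanApply W R) (chanApply W P) / fDiv f R P
      ≤ K * chiSq (chanApply W R) (chanApply W P) / (q * p * chiSq R P) :=
        div_le_div₀ (mul_nonneg h.coeff_nonneg (chiSq_nonneg _ hWP))
          (h.fDiv_le_mul_chiSq hWP hWR.1 hsumY) (by positivity)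
          (h.mul_mul_chiSq_le_fDiv hq hp hP hPX.2 hR)
    _ = K / (q * p) * (chiSq (chanApply W R) (chanApply W P) / chiSq R P) :=
        mul_div_mul_comm _ _ _ _
    _ ≤ K / (q * p) * etaChi P W := by
        gcongr
        · exact div_nonneg h.coeff_nonneg (by positivity)
        · exact chiSq_div_le_etaChi hW hP hWP hR hχ

theorem etaF_le_mul_etaChi (h : ChiSqEnvelope f a q c K) (hq : 0 < q)
    (hp : ∀ x, p ≤ P x) (hp0 : 0 < p) (hPX : IsPmf P) (hP : ∀ x, 0 < P x) (hW : IsChannel W)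
    (hWP : ∀ y, 0 < chanApply W P y) : etaF f P W ≤ K / (q * p) * etaChi P W := by
  refine Real.sSup_le ?_
    (mul_nonneg (div_nonneg h.coeff_nonneg (by positivity)) (etaChi_nonneg hWP))
  rintro r ⟨R, hR, hpos, rfl⟩
  exact h.fDiv_div_le_mul_etaChi hq hp hp0 hPX hP hW hWP hR hpos

/-- Along `P + ε (R - P)` both divergences are `f''(1)/2` times the χ²-divergences up to
`o(ε²)`, so the χ²-ratio is a limit of f-divergence ratios. -/
theorem chiSq_div_le_etaF (h : ChiSqEnvelope f a q c K) (hq : 0 < q)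
    (hp : ∀ x, p ≤ P x) (hp0 : 0 < p) (hPX : IsPmf P) (hP : ∀ x, 0 < P x) (hW : IsChannel W)
    (hWP : ∀ y, 0 < chanApply W P y) (hf1 : f 1 = 0) (hd1 : DifferentiableAt ℝ f 1)
    (hd2 : DifferentiableAt ℝ (deriv f) 1) (hne : deriv (deriv f) 1 ≠ 0) (hR : IsPmf R)
    (hχ : 0 < chiSq R P) :
    chiSq (chanApply W R) (chanApply W P) / chiSq R P ≤ etaF f P W := by
  have hbdd : BddAbove {r : ℝ | ∃ R : 𝒳 → ℝ, IsPmf R ∧ 0 < fDiv f R P ∧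
      r = fDiv f (chanApply W R) (chanApply W P) / fDiv f R P} := by
    refine ⟨K / (q * p) * etaChi P W, ?_⟩
    rintro r ⟨R, hR, hpos, rfl⟩
    exact h.fDiv_div_le_mul_etaChi hq hp hp0 hPX hP hW hWP hR hpos
  have hout := tendsto_fDiv_line_div_sq hf1 hd1 hd2 hne hWP
    (R := chanApply W R) (by rw [(hW.isPmf_chanApply hR).2, (hW.isPmf_chanApply hPX).2])
  have hin := tendsto_fDiv_line_div_sq hf1 hd1 hd2 hne hP (by rw [hR.2, hPX.2])
  have hratio := (hout.div hin (mul_ne_zero (div_ne_zero hne two_ne_zero) hχ.ne')).mono_left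
    (nhdsGT_le_nhdsNE 0)
  rw [mul_div_mul_left _ _ (div_ne_zero hne two_ne_zero)] at hratio
  refine le_of_tendsto hratio ?_
  filter_upwards [Ioo_mem_nhdsGT one_pos] with ε ⟨hε0, hε1⟩
  have hRε := hPX.line hR hε0.le hε1.le
  have hpos : 0 < fDiv f (fun x => P x + ε * (R x - P x)) P := by
    refine lt_of_lt_of_le ?_ (h.mul_mul_chiSq_le_fDiv hq hp hP hPX.2 hRε)
    rw [chiSq_line]
    positivity
  rw [Pi.div_apply, div_div_div_cancel_right₀ (pow_ne_zero 2 hε0.ne'), ← chanApply_line]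
  exact le_csSup hbdd ⟨_, hRε, hpos, rfl⟩

theorem etaChi_le_etaF (h : ChiSqEnvelope f a q c K) (hq : 0 < q)
    (hp : ∀ x, p ≤ P x) (hp0 : 0 < p) (hPX : IsPmf P) (hP : ∀ x, 0 < P x) (hW : IsChannel W)
    (hWP : ∀ y, 0 < chanApply W P y) (hf1 : f 1 = 0) (hd1 : DifferentiableAt ℝ f 1)
    (hd2 : DifferentiableAt ℝ (deriv f) 1) (hne : deriv (deriv f) 1 ≠ 0) :
    etaChi P W ≤ etaF f P W := by
  refine Real.sSup_le ?_ (h.etaF_nonneg hPX hW hWP)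
  rintro r ⟨R, hR, hχ, rfl⟩
  exact h.chiSq_div_le_etaF hq hp hp0 hPX hP hW hWP hf1 hd1 hd2 hne hR hχ

end ChiSqEnvelope

end Contraction

theorem chiSqEnvelope_of_convexOn {f : ℝ → ℝ} {c : ℝ} (hconv : ConvexOn ℝ (Ioi 0) f)
    (hf1 : f 1 = 0) (hd1 : DifferentiableAt ℝ f 1) (hf0 : ContinuousWithinAt f (Ioi 0) 0)
    (hconc : ConcaveOn ℝ (Ioi 0) fun x => (f x - f 0) / x)
    (hcond : ∀ t, 0 < t → deriv (deriv f) 1 / 2 * (t - 1) ^ 2 ≤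
      (f t - deriv f 1 * (t - 1)) * (1 - c * (t - 1))) :
    ChiSqEnvelope f (deriv f 1) (deriv (deriv f) 1) c (deriv f 1 + f 0) where
  tangent_le t ht := by
    refine le_of_forall_pos_of_continuousWithinAt (u := fun t => deriv f 1 * (t - 1))
      (by fun_prop) hf0 (fun t ht => ?_) ht
    simpa [hf1] using
      hconv.add_mul_sub_le_of_hasDerivAt (mem_Ioi.2 one_pos) (mem_Ioi.2 ht) hd1.hasDerivAt
  sub_le_mul_sq t ht := by
    rcases ht.eq_or_lt with rfl | ht
    · exact le_of_eq (by ring)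
    have hder : HasDerivAt (fun x => (f x - f 0) / x) (deriv f 1 + f 0) 1 :=
      ((hd1.hasDerivAt.sub_const (f 0)).div (hasDerivAt_id 1) one_ne_zero).congr_deriv
        (by simp [hf1])
    have h := hconc.le_add_mul_sub_of_hasDerivAt (mem_Ioi.2 one_pos) (mem_Ioi.2 ht) hder
    rw [hf1, div_le_iff₀ ht] at h
    linear_combination h
  mul_sq_le_mul t ht :=
    le_of_forall_pos_of_continuousWithinAt (by fun_prop) (by fun_prop) hcond ht

theorem general_contraction_coefficient_bound_general
    {𝒳 𝒴 : Type*} [Fintype 𝒳] [Fintype 𝒴] [Nonempty 𝒳]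
    (f : ℝ → ℝ)
    (hconv : ConvexOn ℝ (Set.Ioi (0 : ℝ)) f)
    (hf1 : f 1 = 0)
    (hd1 : DifferentiableAt ℝ f 1)
    (hd2 : DifferentiableAt ℝ (deriv f) 1)
    (hf2pos : 0 < deriv (deriv f) 1)
    (hcond : ∀ t : ℝ, 0 < t →
      deriv (deriv f) 1 / 2 * (t - 1) ^ 2 ≤
        (f t - deriv f 1 * (t - 1)) *
          (1 - deriv (deriv (deriv f)) 1 / (3 * deriv (deriv f) 1) * (t - 1)))
    (hf0 : Filter.Tendsto f (nhdsWithin 0 (Set.Ioi (0 : ℝ))) (nhds (f 0)))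
    (hconc : ConcaveOn ℝ (Set.Ioi (0 : ℝ)) (fun x => (f x - f 0) / x))
    (PX : 𝒳 → ℝ) (W : 𝒴 → 𝒳 → ℝ)
    (hPX : IsPmf PX) (hPXpos : ∀ x, 0 < PX x)
    (hW : IsChannel W) (hPY : ∀ y, 0 < chanApply W PX y) :
    etaChi PX W ≤ etaF f PX W ∧
      etaF f PX W ≤ (deriv f 1 + f 0) /
        (deriv (deriv f) 1 * Finset.univ.inf' Finset.univ_nonempty PX) *
        etaChi PX W := by
  have h := chiSqEnvelope_of_convexOn hconv hf1 hd1 hf0 hconc hcond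
  have hp : ∀ x, Finset.univ.inf' Finset.univ_nonempty PX ≤ PX x :=
    fun x => Finset.inf'_le _ (Finset.mem_univ x)
  have hp0 : 0 < Finset.univ.inf' Finset.univ_nonempty PX :=
    (Finset.lt_inf'_iff _).2 fun x _ => hPXpos x
  exact ⟨h.etaChi_le_etaF hf2pos hp hp0 hPX hPXpos hW hPY hf1 hd1 hd2 hf2pos.ne',
    h.etaF_le_mul_etaChi hf2pos hp hp0 hPX hPXpos hW hPY⟩

/-- **Theorem 4 (General Contraction Coefficient Bound).**
`η_{χ²} ≤ η_f ≤ (f'(1) + f(0)) / (f''(1) · minₓ P_X(x)) · η_{χ²}`. -/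
theorem general_contraction_coefficient_bound
    {𝒳 𝒴 : Type*} [Fintype 𝒳] [Fintype 𝒴] [Nonempty 𝒳]
    (hcardX : 2 ≤ Fintype.card 𝒳) (hcardY : 2 ≤ Fintype.card 𝒴)
    (f : ℝ → ℝ)
    (hconv : ConvexOn ℝ (Set.Ioi (0 : ℝ)) f)
    (hstrict : StrictlyConvexAtOne f)
    (hf1 : f 1 = 0)
    (hd1 : DifferentiableAt ℝ f 1)
    (hd2 : DifferentiableAt ℝ (deriv f) 1)
    (hd3 : DifferentiableAt ℝ (deriv (deriv f)) 1)
    (hf2pos : 0 < deriv (deriv f) 1)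
    (hcond : ∀ t : ℝ, 0 < t →
      deriv (deriv f) 1 / 2 * (t - 1) ^ 2 ≤
        (f t - deriv f 1 * (t - 1)) *
          (1 - deriv (deriv (deriv f)) 1 / (3 * deriv (deriv f) 1) * (t - 1)))
    (hf0 : Filter.Tendsto f (nhdsWithin 0 (Set.Ioi (0 : ℝ))) (nhds (f 0)))
    (hconc : ConcaveOn ℝ (Set.Ioi (0 : ℝ)) (fun x => (f x - f 0) / x))
    (PX : 𝒳 → ℝ) (W : 𝒴 → 𝒳 → ℝ)
    (hPX : IsPmf PX) (hPXpos : ∀ x, 0 < PX x)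
    (hW : IsChannel W) (hPY : ∀ y, 0 < chanApply W PX y) :
    etaChi PX W ≤ etaF f PX W ∧
      etaF f PX W ≤ (deriv f 1 + f 0) /
        (deriv (deriv f) 1 * Finset.univ.inf' Finset.univ_nonempty PX) *
        etaChi PX W :=
  general_contraction_coefficient_bound_general f hconv hf1 hd1 hd2 hf2pos hcond hf0 hconc PX W hPX
    hPXpos hW hPY
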